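/- Let 0 > λ1 > λ2 and a > 0. The time-of-flight t(y0) of the left Poincaré map of Welander's piecewise-linear system admits, for y0 > 0 small, the expansion t = (2/a)·y0 + (2T/(3a²))·y0² + (2/9)·(2λ1² + λ1λ2 + 2λ2²)/a³·y0³ + O(y0⁴), where T = λ1 + λ2. -/

import Mathlib

open Asymptotics Filter

noncomputable def psi (l1 l2 t : ℝ) : ℝ :=
  l1 - l2 + l2 * Real.exp (l1 * t) - l1 * Real.exp (l2 * t)

noncomputable def y0fun (a l1 l2 t : ℝ) : ℝ :=
  a * psi l1 l2 t / (l1 * l2 * (Real.exp (l1 * t) - Real.exp (l2 * t)))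

open Real Set Topology Function

/-! Write `ψ = psi l1 l2`, so that `y0fun a l1 l2 = a ψ / ψ'`. Its derivative has the sign of
`ψ'² - ψ ψ'' = λ₁λ₂(λ₁ - λ₂) e^{λ₁t} e^{λ₂t} ψ(-t)`, which is positive for `t > 0` because `ψ`
decreases to `ψ(0) = 0` on `t ≤ 0`; hence `y0fun` is a strictly increasing bijection from small
times onto small `y0 > 0`, and `τ` is its inverse.

Expanding the two exponentials to fourth order gives
`y0(t) = a (t/2 - (λ₁ + λ₂) t²/12 + λ₁λ₂ t³/24) + O(t⁴)`, and the cubic of the statement inverts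
this polynomial up to `O(t⁴)`. As the cubic is Lipschitz near `0`, `t - P(y0(t)) = O(t⁴)`, and
since `t = O(y0(t))` the substitution `t = τ(y)` turns this into `τ(y) - P(y) = O(y⁴)`. -/

theorem Asymptotics.IsBigO.mul_tendsto {α : Type*} {l : Filter α} {f g c : α → ℝ} {c₀ : ℝ}
    (h : f =O[l] g) (hc : Tendsto c l (𝓝 c₀)) : (fun x => f x * c x) =O[l] g := by
  simpa using h.mul (hc.isBigO_one ℝ)

namespace StrictMonoOn

variable {f : ℝ → ℝ} (hf : StrictMonoOn f (Ioi 0)) (hfc : ContinuousOn f (Ioi 0))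
  (hf0 : Tendsto f (𝓝[>] 0) (𝓝 0))
include hf hfc hf0

theorem eventually_mem_image_Ioo {ε : ℝ} (hε : 0 < ε) :
    ∀ᶠ y in 𝓝[>] 0, y ∈ f '' Ioo 0 ε := by
  have hmid : 0 ≤ f (ε / 2) := le_of_tendsto hf0 <| by
    filter_upwards [Ioo_mem_nhdsGT (half_pos hε)] with s hs
    exact (hf hs.1 (half_pos hε) hs.2).le
  filter_upwards [Ioo_mem_nhdsGT (hmid.trans_lt (hf (half_pos hε) hε (half_lt_self hε)))]
    with y hy
  obtain ⟨s, hsy, hs0, hsε⟩ : ∃ s, f s < y ∧ 0 < s ∧ s < ε :=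
    ((hf0.eventually (gt_mem_nhds hy.1)).and (Ioo_mem_nhdsGT hε)).exists
  have := intermediate_value_Ioo hsε.le (hfc.mono fun x hx => hs0.trans_le hx.1) ⟨hsy, hy.2⟩
  exact image_mono (Ioo_subset_Ioo_left hs0.le) this

theorem eventually_invFunOn_mem_Ioo {ε : ℝ} (hε : 0 < ε) :
    ∀ᶠ y in 𝓝[>] 0, invFunOn f (Ioi 0) y ∈ Ioo 0 ε ∧ f (invFunOn f (Ioi 0) y) = y := by
  filter_upwards [hf.eventually_mem_image_Ioo hfc hf0 hε] with y ⟨s, hs, hsy⟩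
  subst hsy
  rw [hf.injOn.leftInvOn_invFunOn hs.1]
  exact ⟨hs, rfl⟩

theorem invFunOn_sub_isBigO {P : ℝ → ℝ} {n : ℕ} (hlin : (fun t => t) =O[𝓝[>] 0] f)
    (hP : (fun t => t - P (f t)) =O[𝓝[>] 0] fun t => t ^ n) :
    (fun y => invFunOn f (Ioi 0) y - P y) =O[𝓝[>] 0] fun y => y ^ n := by
  set g := invFunOn f (Ioi 0)
  have hg : Tendsto g (𝓝[>] 0) (𝓝[>] 0) := (nhdsGT_basis 0).tendsto_right_iff.2 fun ε hε =>
    (hf.eventually_invFunOn_mem_Ioo hfc hf0 hε).mono fun _ h => h.1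
  have hfg : ∀ᶠ y in 𝓝[>] 0, f (g y) = y :=
    (hf.eventually_invFunOn_mem_Ioo hfc hf0 one_pos).mono fun _ h => h.2
  refine ((hP.comp_tendsto hg).trans ((hlin.comp_tendsto hg).pow n)).congr' ?_ ?_
  · filter_upwards [hfg] with y hy
    simp [hy]
  · filter_upwards [hfg] with y hy
    simp [hy]

end StrictMonoOn

section Monotonicity

variable {l1 l2 : ℝ}

theorem hasDerivAt_psi (l1 l2 t : ℝ) :
    HasDerivAt (psi l1 l2) (l1 * l2 * (exp (l1 * t) - exp (l2 * t))) t := by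
  have h1 := ((hasDerivAt_id' t).const_mul l1).exp.const_mul l2
  have h2 := ((hasDerivAt_id' t).const_mul l2).exp.const_mul l1
  exact (((hasDerivAt_const t (l1 - l2)).add h1).sub h2).congr_deriv (by ring)

theorem hasDerivAt_deriv_psi (l1 l2 t : ℝ) :
    HasDerivAt (fun s => l1 * l2 * (exp (l1 * s) - exp (l2 * s)))
      (l1 * l2 * (l1 * exp (l1 * t) - l2 * exp (l2 * t))) t := by
  have h1 := ((hasDerivAt_id' t).const_mul l1).exp
  have h2 := ((hasDerivAt_id' t).const_mul l2).exp
  exact ((h1.sub h2).const_mul (l1 * l2)).congr_deriv (by ring)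

theorem exp_mul_sub_exp_mul_pos (h : l2 < l1) {t : ℝ} (ht : 0 < t) :
    0 < exp (l1 * t) - exp (l2 * t) :=
  sub_pos.2 <| exp_lt_exp.2 <| mul_lt_mul_of_pos_right h ht

theorem exp_mul_sub_exp_mul_ne_zero (h : l1 ≠ l2) {t : ℝ} (ht : t ≠ 0) :
    exp (l1 * t) - exp (l2 * t) ≠ 0 :=
  sub_ne_zero.2 <| exp_injective.ne <| (mul_left_injective₀ ht).ne h

theorem exp_mul_sub_exp_mul_neg (h : l2 < l1) {t : ℝ} (ht : t < 0) :
    exp (l1 * t) - exp (l2 * t) < 0 :=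
  sub_neg.2 <| exp_lt_exp.2 <| mul_lt_mul_of_neg_right h ht

theorem psi_pos_of_neg (hd : 0 < l1 * l2) (h : l2 < l1) {t : ℝ} (ht : t < 0) :
    0 < psi l1 l2 t := by
  have hanti : StrictAntiOn (psi l1 l2) (Iic 0) := by
    refine strictAntiOn_of_deriv_neg (convex_Iic 0)
      (fun s _ => (hasDerivAt_psi l1 l2 s).continuousAt.continuousWithinAt) fun s hs => ?_
    rw [interior_Iic] at hs
    rw [(hasDerivAt_psi l1 l2 s).deriv]
    exact mul_neg_of_pos_of_neg hd (exp_mul_sub_exp_mul_neg h hs)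
  simpa [psi] using hanti ht.le (mem_Iic.2 le_rfl) ht

theorem deriv_psi_sq_sub_psi_mul (l1 l2 t : ℝ) :
    (l1 * l2 * (exp (l1 * t) - exp (l2 * t))) ^ 2
      - psi l1 l2 t * (l1 * l2 * (l1 * exp (l1 * t) - l2 * exp (l2 * t)))
      = l1 * l2 * (l1 - l2) * exp (l1 * t) * exp (l2 * t) * psi l1 l2 (-t) := by
  have e1 : exp (l1 * -t) * exp (l1 * t) = 1 := by rw [← exp_add]; simp
  have e2 : exp (l2 * -t) * exp (l2 * t) = 1 := by rw [← exp_add]; simp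
  simp only [psi]
  linear_combination (l1 * l2 * (l1 - l2)) * (l1 * exp (l1 * t) * e2 - l2 * exp (l2 * t) * e1)

theorem hasDerivAt_y0fun (a : ℝ) (hd : l1 * l2 ≠ 0) (h : l1 ≠ l2) {t : ℝ} (ht : t ≠ 0) :
    HasDerivAt (y0fun a l1 l2)
      (a * ((l1 * l2 * (exp (l1 * t) - exp (l2 * t))) ^ 2
        - psi l1 l2 t * (l1 * l2 * (l1 * exp (l1 * t) - l2 * exp (l2 * t))))
        / (l1 * l2 * (exp (l1 * t) - exp (l2 * t))) ^ 2) t :=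
  (((hasDerivAt_psi l1 l2 t).const_mul a).div (hasDerivAt_deriv_psi l1 l2 t)
    (mul_ne_zero hd (exp_mul_sub_exp_mul_ne_zero h ht))).congr_deriv (by ring)

theorem continuousOn_y0fun (a : ℝ) (hd : l1 * l2 ≠ 0) (h : l1 ≠ l2) :
    ContinuousOn (y0fun a l1 l2) (Ioi 0) :=
  fun _ ht => (hasDerivAt_y0fun a hd h (ne_of_gt ht)).continuousAt.continuousWithinAt

theorem y0fun_strictMonoOn {a : ℝ} (ha : 0 < a) (hd : 0 < l1 * l2) (h : l2 < l1) :
    StrictMonoOn (y0fun a l1 l2) (Ioi 0) := by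
  refine strictMonoOn_of_deriv_pos (convex_Ioi 0) (continuousOn_y0fun a hd.ne' h.ne')
    fun t ht => ?_
  rw [interior_Ioi] at ht
  rw [(hasDerivAt_y0fun a hd.ne' h.ne' (ne_of_gt ht)).deriv, deriv_psi_sq_sub_psi_mul]
  have := psi_pos_of_neg hd h (neg_neg_of_pos ht)
  have := exp_mul_sub_exp_mul_pos h ht
  have : 0 < l1 - l2 := sub_pos.2 h
  positivity

end Monotonicity

noncomputable def expTaylor4 (x : ℝ) : ℝ := 1 + x + x ^ 2 / 2 + x ^ 3 / 6 + x ^ 4 / 24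

theorem exp_sub_expTaylor4_isBigO : (fun x => exp x - expTaylor4 x) =O[𝓝 0] fun x => x ^ 5 := by
  refine IsBigO.of_bound 1 ?_
  filter_upwards [Icc_mem_nhds (neg_one_lt_zero : (-1 : ℝ) < 0) one_pos] with x hx
  have := Real.exp_bound (abs_le.2 hx) (n := 5) (by norm_num)
  norm_num [Finset.sum_range_succ, Nat.factorial] at this
  simp only [expTaylor4, norm_eq_abs, abs_pow, one_mul]
  linarith [pow_nonneg (abs_nonneg x) 5]

theorem exp_mul_sub_expTaylor4_isBigO (l : ℝ) :
    (fun t => exp (l * t) - expTaylor4 (l * t)) =O[𝓝 0] fun t => t ^ 5 := by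
  have hl : Tendsto (fun t => l * t) (𝓝 0) (𝓝 0) := by
    simpa using (continuous_const_mul l).tendsto 0
  refine (exp_sub_expTaylor4_isBigO.comp_tendsto hl).trans ?_
  simpa only [comp_def, mul_pow] using isBigO_const_mul_self (l ^ 5) (fun t : ℝ => t ^ 5) _

noncomputable def psiQuotTaylor (l1 l2 t : ℝ) : ℝ :=
  t / 2 - (l1 + l2) * t ^ 2 / 12 + l1 * l2 * t ^ 3 / 24

theorem continuous_psiQuotTaylor (l1 l2 : ℝ) : Continuous (psiQuotTaylor l1 l2) := by
  unfold psiQuotTaylor; fun_prop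

theorem psi_sub_psiQuotTaylor_mul_eq (l1 l2 t : ℝ) :
    psi l1 l2 t - l1 * l2 * psiQuotTaylor l1 l2 t * (exp (l1 * t) - exp (l2 * t))
      = t ^ 5 * ((l1 * l2 ^ 5 + l1 ^ 2 * l2 ^ 4 - l1 ^ 4 * l2 ^ 2 - l1 ^ 5 * l2) / 144
          + (-(l1 * l2 ^ 6) + l1 ^ 2 * l2 ^ 5 - l1 ^ 5 * l2 ^ 2 + l1 ^ 6 * l2) * t / 288
          + (l1 ^ 2 * l2 ^ 6 - l1 ^ 6 * l2 ^ 2) * t ^ 2 / 576)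
        + (exp (l1 * t) - expTaylor4 (l1 * t)) * (l2 - l1 * l2 * psiQuotTaylor l1 l2 t)
        + (exp (l2 * t) - expTaylor4 (l2 * t)) * (l1 * l2 * psiQuotTaylor l1 l2 t - l1) := by
  unfold psi psiQuotTaylor expTaylor4
  ring

theorem psi_sub_psiQuotTaylor_mul_isBigO (l1 l2 : ℝ) :
    (fun t => psi l1 l2 t - l1 * l2 * psiQuotTaylor l1 l2 t * (exp (l1 * t) - exp (l2 * t)))
      =O[𝓝 0] fun t => t ^ 5 := by
  have hr := (continuous_psiQuotTaylor l1 l2).tendsto 0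
  simp_rw [psi_sub_psiQuotTaylor_mul_eq]
  exact (((isBigO_refl _ _).mul_tendsto (Continuous.tendsto (by fun_prop) 0)).add
      ((exp_mul_sub_expTaylor4_isBigO l1).mul_tendsto
        (tendsto_const_nhds.sub (hr.const_mul _)))).add
    ((exp_mul_sub_expTaylor4_isBigO l2).mul_tendsto ((hr.const_mul _).sub tendsto_const_nhds))

theorem isBigO_exp_mul_sub_exp_mul {l1 l2 : ℝ} (h : l1 ≠ l2) :
    (fun t : ℝ => t) =O[𝓝 0] fun t => exp (l1 * t) - exp (l2 * t) := by
  have hB : HasDerivAt (fun t => exp (l1 * t) - exp (l2 * t)) (l1 - l2) 0 := by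
    have h1 := ((hasDerivAt_id' (0 : ℝ)).const_mul l1).exp
    have h2 := ((hasDerivAt_id' (0 : ℝ)).const_mul l2).exp
    exact (h1.sub h2).congr_deriv (by simp)
  have := (hB.isTheta_sub (sub_ne_zero.2 h)).isBigO_symm.comp_tendsto
    (tendsto_id.prodMk (tendsto_const_pure (b := (0 : ℝ))))
  simpa [comp_def] using this

theorem y0fun_sub_psiQuotTaylor_isBigO (a : ℝ) {l1 l2 : ℝ} (hd : l1 * l2 ≠ 0) (h : l1 ≠ l2) :
    (fun t => y0fun a l1 l2 t - a * psiQuotTaylor l1 l2 t) =O[𝓝[>] 0] fun t => t ^ 4 := by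
  have hB : ∀ᶠ t in 𝓝[>] (0 : ℝ), exp (l1 * t) - exp (l2 * t) ≠ 0 :=
    eventually_mem_nhdsWithin.mono fun t ht => exp_mul_sub_exp_mul_ne_zero h (ne_of_gt ht)
  have hnum := ((psi_sub_psiQuotTaylor_mul_isBigO l1 l2).trans
    ((isBigO_refl (fun t : ℝ => t ^ 4) _).mul (isBigO_exp_mul_sub_exp_mul h))).mono
    (nhdsWithin_le_nhds (s := Ioi 0))
  refine ((hnum.mul (isBigO_refl (fun t => (exp (l1 * t) - exp (l2 * t))⁻¹) _)).const_mul_left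
    (a / (l1 * l2))).congr' ?_ ?_
  all_goals filter_upwards [hB] with t ht
  · simp only [y0fun]
    field_simp [left_ne_zero_of_mul hd, right_ne_zero_of_mul hd]
  · exact mul_inv_cancel_right₀ ht _

noncomputable def flightCubic (a l1 l2 y : ℝ) : ℝ :=
  (2 / a) * y + (2 * (l1 + l2) / (3 * a ^ 2)) * y ^ 2 +
    (2 / 9) * (2 * l1 ^ 2 + l1 * l2 + 2 * l2 ^ 2) / a ^ 3 * y ^ 3

theorem flightCubic_sub_flightCubic (a l1 l2 x z : ℝ) :
    flightCubic a l1 l2 x - flightCubic a l1 l2 z = (x - z) * (2 / a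
      + 2 * (l1 + l2) / (3 * a ^ 2) * (x + z)
      + (2 / 9) * (2 * l1 ^ 2 + l1 * l2 + 2 * l2 ^ 2) / a ^ 3 * (x ^ 2 + x * z + z ^ 2)) := by
  unfold flightCubic
  ring

theorem sub_flightCubic_psiQuotTaylor {a : ℝ} (ha : a ≠ 0) (l1 l2 t : ℝ) :
    t - flightCubic a l1 l2 (a * psiQuotTaylor l1 l2 t) = t ^ 4 * (5 / 216 * (l1 ^ 3 + l2 ^ 3)
      + (-(l1 ^ 4 + l2 ^ 4) / 216 - (l1 ^ 3 * l2 + l1 * l2 ^ 3) / 48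
          - 5 * l1 ^ 2 * l2 ^ 2 / 432) * t
      + ((l1 ^ 5 + l2 ^ 5) / 3888 + 43 * (l1 ^ 4 * l2 + l1 * l2 ^ 4) / 7776
          + 7 * (l1 ^ 3 * l2 ^ 2 + l1 ^ 2 * l2 ^ 3) / 972) * t ^ 2
      + (-(l1 ^ 5 * l2 + l1 * l2 ^ 5) / 2592 - 11 * (l1 ^ 4 * l2 ^ 2 + l1 ^ 2 * l2 ^ 4) / 5184
          - l1 ^ 3 * l2 ^ 3 / 576) * t ^ 3
      + ((l1 ^ 5 * l2 ^ 2 + l1 ^ 2 * l2 ^ 5) / 5184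
          + (l1 ^ 4 * l2 ^ 3 + l1 ^ 3 * l2 ^ 4) / 3456) * t ^ 4
      + (-(l1 ^ 5 * l2 ^ 3 + l1 ^ 3 * l2 ^ 5) / 31104 - l1 ^ 4 * l2 ^ 4 / 62208) * t ^ 5) := by
  unfold flightCubic psiQuotTaylor
  field_simp
  ring

theorem flightCubic_sub_flightCubic_isBigO {α : Type*} {l : Filter α} (a l1 l2 : ℝ)
    {x z : α → ℝ} (hx : Tendsto x l (𝓝 0)) (hz : Tendsto z l (𝓝 0)) :
    (fun s => flightCubic a l1 l2 (x s) - flightCubic a l1 l2 (z s)) =O[l] fun s => x s - z s := by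
  simp_rw [flightCubic_sub_flightCubic]
  exact (isBigO_refl _ _).mul_tendsto <|
    (tendsto_const_nhds.add (tendsto_const_nhds.mul (hx.add hz))).add
      (tendsto_const_nhds.mul (((hx.pow 2).add (hx.mul hz)).add (hz.pow 2)))

theorem tendsto_const_mul_psiQuotTaylor (a l1 l2 : ℝ) :
    Tendsto (fun t => a * psiQuotTaylor l1 l2 t) (𝓝 0) (𝓝 0) := by
  simpa [psiQuotTaylor] using ((continuous_psiQuotTaylor l1 l2).tendsto 0).const_mul a

section Expansion

variable (a : ℝ) {l1 l2 : ℝ} (hd : l1 * l2 ≠ 0) (h : l1 ≠ l2)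
include hd h

theorem tendsto_y0fun_nhdsGT_zero : Tendsto (y0fun a l1 l2) (𝓝[>] 0) (𝓝 0) := by
  have h4 : Tendsto (fun t : ℝ => t ^ 4) (𝓝[>] 0) (𝓝 0) := by
    simpa using ((continuous_pow 4).tendsto (0 : ℝ)).mono_left nhdsWithin_le_nhds
  simpa using ((y0fun_sub_psiQuotTaylor_isBigO a hd h).trans_tendsto h4).add
    ((tendsto_const_mul_psiQuotTaylor a l1 l2).mono_left nhdsWithin_le_nhds)

theorem sub_flightCubic_y0fun_isBigO (ha : a ≠ 0) :
    (fun t => t - flightCubic a l1 l2 (y0fun a l1 l2 t)) =O[𝓝[>] 0] fun t => t ^ 4 := by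
  have htaylor : (fun t => t - flightCubic a l1 l2 (a * psiQuotTaylor l1 l2 t))
      =O[𝓝[>] 0] fun t => t ^ 4 := by
    simp_rw [sub_flightCubic_psiQuotTaylor ha]
    exact ((isBigO_refl _ _).mul_tendsto (Continuous.tendsto (by fun_prop) 0)).mono
      nhdsWithin_le_nhds
  have hlip := (flightCubic_sub_flightCubic_isBigO a l1 l2
    ((tendsto_const_mul_psiQuotTaylor a l1 l2).mono_left nhdsWithin_le_nhds)
    (tendsto_y0fun_nhdsGT_zero a hd h)).trans
    ((y0fun_sub_psiQuotTaylor_isBigO a hd h).neg_left.congr_left fun t => neg_sub _ _)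
  exact (htaylor.add hlip).congr_left fun t => by ring

theorem isBigO_y0fun (ha : a ≠ 0) : (fun t => t) =O[𝓝[>] 0] y0fun a l1 l2 := by
  have hlo : (fun t => y0fun a l1 l2 t - a / 2 * t) =o[𝓝[>] 0] fun t => a / 2 * t := by
    have hsq : (fun t => y0fun a l1 l2 t - a / 2 * t) =O[𝓝[>] 0] fun t => t ^ 2 := by
      have h4 := ((y0fun_sub_psiQuotTaylor_isBigO a hd h).trans
        ((isLittleO_pow_pow (by norm_num : 2 < 4)).isBigO.mono nhdsWithin_le_nhds))
      have h2 := ((isBigO_refl (fun t : ℝ => t ^ 2) _).mul_tendsto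
        (Continuous.tendsto (f := fun t => a * (-(l1 + l2) / 12 + l1 * l2 * t / 24))
          (by fun_prop) 0)).mono (nhdsWithin_le_nhds (s := Ioi 0))
      exact (h4.add h2).congr_left fun t => by unfold psiQuotTaylor; ring
    exact (hsq.trans_isLittleO ((isLittleO_pow_id one_lt_two).mono nhdsWithin_le_nhds))
      |>.trans_isBigO (isBigO_self_const_mul (div_ne_zero ha two_ne_zero) _ _)
  exact (isBigO_self_const_mul (div_ne_zero ha two_ne_zero) _ _).trans
    (hlo.right_isBigO_add.congr_right fun t => sub_add_cancel _ _)

end Expansion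

theorem time_of_flight_expansion (a l1 l2 : ℝ) (ha : a > 0) (h1 : 0 > l1) (h2 : l1 > l2) :
    ∃ τ : ℝ → ℝ, (∀ t : ℝ, t > 0 → τ (y0fun a l1 l2 t) = t) ∧
      (fun y : ℝ => τ y - ((2 / a) * y + (2 * (l1 + l2) / (3 * a ^ 2)) * y ^ 2 +
          (2 / 9) * (2 * l1 ^ 2 + l1 * l2 + 2 * l2 ^ 2) / a ^ 3 * y ^ 3)) =O[nhdsWithin 0 (Set.Ioi 0)]
        fun y : ℝ => y ^ 4 := by
  have hd : 0 < l1 * l2 := mul_pos_of_neg_of_neg h1 (h2.trans h1)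
  have hmono := y0fun_strictMonoOn ha hd h2
  refine ⟨invFunOn (y0fun a l1 l2) (Ioi 0), fun t ht => hmono.injOn.leftInvOn_invFunOn ht, ?_⟩
  exact hmono.invFunOn_sub_isBigO (continuousOn_y0fun a hd.ne' h2.ne')
    (tendsto_y0fun_nhdsGT_zero a hd.ne' h2.ne') (isBigO_y0fun a hd.ne' h2.ne' ha.ne')
    (sub_flightCubic_y0fun_isBigO a hd.ne' h2.ne' ha.ne')
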